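/- arXiv:2312.16641 — 3 statements merged into one kernel-verified Lean document; each statement's English description precedes it below -/
import Mathlib

section
/- Let d ≥ 1, let p > 2 and R > 0 be real numbers, set q = min(p−2, 1) and c_p = 1 if p ≤ 3 and c_p = (p−2) R^(p−3) if p > 3. Then for all vectors v, w, a, b ∈ ℝ^d (with the Euclidean norm) satisfying ‖w − v‖ ≤ R and ‖b − a‖ ≤ R, one has |‖w − v‖^(p−2) − ‖b − a‖^(p−2)| ≤ c_p ( ‖v − a‖^q + ‖w − b‖^q ). -/
/-!
The triangle inequality bounds |‖w - v‖ - ‖b - a‖| by ‖v - a‖ + ‖w - b‖, so it suffices to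
control the modulus of continuity of t ↦ t ^ s, s = p - 2, on [0, R]. For s ≤ 1 this map is
s-Hölder with constant 1, by subadditivity of t ↦ t ^ s, and subadditivity once more splits
(‖v - a‖ + ‖w - b‖) ^ s. For s > 1 it is Lipschitz with constant s R ^ (s - 1), by the mean
value theorem.
-/

open Real Set

lemma abs_norm_sub_sub_norm_sub_le {E : Type*} [SeminormedAddCommGroup E] (v w a b : E) :
    |‖w - v‖ - ‖b - a‖| ≤ ‖v - a‖ + ‖w - b‖ :=
  calc |‖w - v‖ - ‖b - a‖| ≤ ‖(w - v) - (b - a)‖ := abs_norm_sub_norm_le _ _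
    _ = ‖(w - b) - (v - a)‖ := by congr 1; abel
    _ ≤ ‖w - b‖ + ‖v - a‖ := norm_sub_le _ _
    _ = ‖v - a‖ + ‖w - b‖ := add_comm _ _

namespace Real

lemma abs_rpow_sub_rpow_le_abs_sub_rpow {s x y : ℝ} (hs₀ : 0 ≤ s) (hs₁ : s ≤ 1)
    (hx : 0 ≤ x) (hy : 0 ≤ y) : |x ^ s - y ^ s| ≤ |x - y| ^ s := by
  wlog hyx : y ≤ x generalizing x y
  · rw [abs_sub_comm, abs_sub_comm x]
    exact this hy hx (le_of_not_ge hyx)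
  have hsub : x ^ s ≤ (x - y) ^ s + y ^ s :=
    calc x ^ s = ((x - y) + y) ^ s := by rw [sub_add_cancel]
      _ ≤ (x - y) ^ s + y ^ s := rpow_add_le_add_rpow (sub_nonneg.2 hyx) hy hs₀ hs₁
  rw [abs_of_nonneg (sub_nonneg.2 (rpow_le_rpow hy hyx hs₀)), abs_of_nonneg (sub_nonneg.2 hyx)]
  linarith

lemma abs_rpow_sub_rpow_le_mul_abs_sub {s R x y : ℝ} (hs : 1 ≤ s)
    (hx : x ∈ Icc 0 R) (hy : y ∈ Icc 0 R) : |x ^ s - y ^ s| ≤ s * R ^ (s - 1) * |x - y| := by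
  have hderiv : ∀ t ∈ Icc 0 R,
      HasDerivWithinAt (fun u : ℝ => u ^ s) (s * t ^ (s - 1)) (Icc 0 R) t := fun t _ =>
    (hasDerivAt_rpow_const (Or.inr hs)).hasDerivWithinAt
  have hbound : ∀ t ∈ Icc 0 R, ‖s * t ^ (s - 1)‖ ≤ s * R ^ (s - 1) := by
    intro t ht
    rw [norm_eq_abs, abs_of_nonneg (mul_nonneg (by linarith) (rpow_nonneg ht.1 _))]
    exact mul_le_mul_of_nonneg_left (rpow_le_rpow ht.1 ht.2 (by linarith)) (by linarith)
  simpa only [norm_eq_abs] using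
    (convex_Icc 0 R).norm_image_sub_le_of_norm_hasDerivWithin_le hderiv hbound hy hx

end Real

theorem kernel_discrepancy_bound_general (d : ℕ) (p R : ℝ) (hp : 2 < p)
    (q cp : ℝ) (hq : q = min (p - 2) 1)
    (hcp : cp = if p ≤ 3 then 1 else (p - 2) * R ^ (p - 3)) :
    ∀ v w a b : EuclideanSpace ℝ (Fin d), ‖w - v‖ ≤ R → ‖b - a‖ ≤ R →
      |‖w - v‖ ^ (p - 2) - ‖b - a‖ ^ (p - 2)| ≤ cp * (‖v - a‖ ^ q + ‖w - b‖ ^ q) := by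
  intro v w a b hwv hba
  have htri := abs_norm_sub_sub_norm_sub_le v w a b
  rcases le_or_gt p 3 with hp3 | hp3
  · rw [hq, min_eq_left (by linarith), hcp, if_pos hp3, one_mul]
    calc |‖w - v‖ ^ (p - 2) - ‖b - a‖ ^ (p - 2)| ≤ |‖w - v‖ - ‖b - a‖| ^ (p - 2) :=
          abs_rpow_sub_rpow_le_abs_sub_rpow (by linarith) (by linarith) (norm_nonneg _)
            (norm_nonneg _)
      _ ≤ (‖v - a‖ + ‖w - b‖) ^ (p - 2) := by gcongr
      _ ≤ ‖v - a‖ ^ (p - 2) + ‖w - b‖ ^ (p - 2) :=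
          rpow_add_le_add_rpow (norm_nonneg _) (norm_nonneg _) (by linarith) (by linarith)
  · rw [hq, min_eq_right (by linarith), hcp, if_neg (not_le.2 hp3), rpow_one, rpow_one]
    calc |‖w - v‖ ^ (p - 2) - ‖b - a‖ ^ (p - 2)|
        ≤ (p - 2) * R ^ (p - 2 - 1) * |‖w - v‖ - ‖b - a‖| :=
          abs_rpow_sub_rpow_le_mul_abs_sub (by linarith) ⟨norm_nonneg _, hwv⟩
            ⟨norm_nonneg _, hba⟩
      _ = (p - 2) * R ^ (p - 3) * |‖w - v‖ - ‖b - a‖| := by ring_nf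
      _ ≤ (p - 2) * R ^ (p - 3) * (‖v - a‖ + ‖w - b‖) := by
          have hR : 0 ≤ R := (norm_nonneg _).trans hwv
          gcongr

theorem kernel_discrepancy_bound (d : ℕ) (hd : 1 ≤ d) (p R : ℝ) (hp : 2 < p) (hR : 0 < R)
    (q cp : ℝ) (hq : q = min (p - 2) 1)
    (hcp : cp = if p ≤ 3 then 1 else (p - 2) * R ^ (p - 3)) :
    ∀ v w a b : EuclideanSpace ℝ (Fin d), ‖w - v‖ ≤ R → ‖b - a‖ ≤ R →
      |‖w - v‖ ^ (p - 2) - ‖b - a‖ ^ (p - 2)| ≤ cp * (‖v - a‖ ^ q + ‖w - b‖ ^ q) :=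
  kernel_discrepancy_bound_general d p R hp q cp hq hcp
end

section
/- Let d ≥ 1 and p ≥ 2, V > 0, L_φ ≥ 0, L_u ≥ 0, K ≥ 0 be real numbers. Let φ : ℝ^d → ℝ be nonnegative with φ(x) ≤ K for all x and Lipschitz with constant L_φ; let u : ℝ^d → ℝ^d be Lipschitz with constant L_u and satisfy ‖u(y) − u(x)‖ ≤ V for all x, y; let ρ : ℝ^d → ℝ be nonnegative, integrable, with ∫ ρ(y) dy = 1. Define A(x) = ∫ φ(x − y) ‖u(y) − u(x)‖^(p−2) (u(y) − u(x)) ρ(y) dy ∈ ℝ^d. Then A is Lipschitz with constant L_φ V^(p−1) + K (p−1) V^(p−2) L_u. -/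
/-!
Write the integrand as `ρ y • φ (x - y) • Φ (u y - u x)` with `Φ z = ‖z‖ ^ (p - 2) • z`. Between
`x₁` and `x₂` it changes by the variation of `φ`, at most `Lφ ‖x₁ - x₂‖` times `‖Φ‖ ≤ V ^ (p - 1)`,
plus `φ ≤ K` times the variation of `Φ`. On the ball of radius `V`, `Φ` is
`(p - 1) V ^ (p - 2)`-Lipschitz: splitting `Φ a - Φ b` into a tangential and a radial part, the
radial part is controlled by the tangent-line inequality of the convex function `t ↦ t ^ (p - 1)`.
Integrating the pointwise bound against the probability density `ρ` gives the estimate.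
-/

open MeasureTheory

lemma mul_rpow_sub_rpow_le {q s t : ℝ} (hq : 0 ≤ q) (hs : 0 < s) (ht : 0 ≤ t) :
    t * (s ^ q - t ^ q) ≤ q * s ^ q * (s - t) := by
  -- tangent line of the convex function `x ↦ x ^ (q + 1)` at `s`, evaluated at `t`
  have htangent : s ^ q * (s + (q + 1) * (t - s)) ≤ t ^ q * t := by
    have hbernoulli := one_add_mul_self_le_rpow_one_add (s := t / s - 1) (p := q + 1)
      (by linarith [div_nonneg ht hs.le]) (by linarith)
    rw [add_sub_cancel, Real.div_rpow ht hs.le, Real.rpow_add_one hs.ne',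
      Real.rpow_add_one' ht (by linarith), le_div_iff₀ (by positivity)] at hbernoulli
    refine le_of_eq_of_le ?_ hbernoulli
    field_simp
  linarith

section RpowSmul

variable {E : Type*} [NormedAddCommGroup E] [NormedSpace ℝ E] {q M : ℝ}

lemma norm_rpow_smul_le (hq : 0 ≤ q) {a : E} (ha : ‖a‖ ≤ M) :
    ‖‖a‖ ^ q • a‖ ≤ M ^ (q + 1) := by
  rw [norm_smul, Real.norm_of_nonneg (by positivity),
    Real.rpow_add_one' ((norm_nonneg a).trans ha) (by linarith)]
  have hM : 0 ≤ M := (norm_nonneg a).trans ha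
  gcongr

lemma norm_rpow_smul_sub_rpow_smul_le_of_norm_le (hq : 0 ≤ q) {a b : E} (hba : ‖b‖ ≤ ‖a‖) :
    ‖‖a‖ ^ q • a - ‖b‖ ^ q • b‖ ≤ (q + 1) * ‖a‖ ^ q * ‖a - b‖ := by
  rcases (norm_nonneg a).eq_or_lt with ha | ha
  · have hb : b = 0 := norm_le_zero_iff.mp (ha ▸ hba)
    simp [norm_eq_zero.mp ha.symm, hb]
  have hpow : ‖b‖ ^ q ≤ ‖a‖ ^ q := by gcongr
  have hsplit : ‖a‖ ^ q • a - ‖b‖ ^ q • b = ‖a‖ ^ q • (a - b) + (‖a‖ ^ q - ‖b‖ ^ q) • b := by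
    rw [smul_sub, sub_smul]
    abel
  have hradial : ‖(‖a‖ ^ q - ‖b‖ ^ q) • b‖ ≤ q * ‖a‖ ^ q * ‖a - b‖ := calc
    ‖(‖a‖ ^ q - ‖b‖ ^ q) • b‖ = ‖b‖ * (‖a‖ ^ q - ‖b‖ ^ q) := by
      rw [norm_smul, Real.norm_of_nonneg (by linarith), mul_comm]
    _ ≤ q * ‖a‖ ^ q * (‖a‖ - ‖b‖) := mul_rpow_sub_rpow_le hq ha (norm_nonneg b)
    _ ≤ q * ‖a‖ ^ q * ‖a - b‖ := by gcongr; exact norm_sub_norm_le a b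
  calc ‖‖a‖ ^ q • a - ‖b‖ ^ q • b‖
      ≤ ‖‖a‖ ^ q • (a - b)‖ + ‖(‖a‖ ^ q - ‖b‖ ^ q) • b‖ := hsplit ▸ norm_add_le _ _
    _ ≤ ‖a‖ ^ q * ‖a - b‖ + q * ‖a‖ ^ q * ‖a - b‖ := by
      rw [norm_smul, Real.norm_of_nonneg (by positivity)]
      gcongr
    _ = (q + 1) * ‖a‖ ^ q * ‖a - b‖ := by ring

lemma norm_rpow_smul_sub_rpow_smul_le (hq : 0 ≤ q) {a b : E} (ha : ‖a‖ ≤ M) (hb : ‖b‖ ≤ M) :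
    ‖‖a‖ ^ q • a - ‖b‖ ^ q • b‖ ≤ (q + 1) * M ^ q * ‖a - b‖ := by
  rcases le_total ‖b‖ ‖a‖ with hba | hab
  · refine (norm_rpow_smul_sub_rpow_smul_le_of_norm_le hq hba).trans ?_
    gcongr
  · rw [norm_sub_rev, norm_sub_rev a]
    refine (norm_rpow_smul_sub_rpow_smul_le_of_norm_le hq hab).trans ?_
    gcongr

lemma norm_smul_rpow_smul_sub_le (hq : 0 ≤ q) {c₁ c₂ δ K : ℝ} (hc : |c₁ - c₂| ≤ δ)
    (hc₂ : 0 ≤ c₂) (hc₂K : c₂ ≤ K) {a b : E} (ha : ‖a‖ ≤ M) (hb : ‖b‖ ≤ M) :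
    ‖c₁ • ‖a‖ ^ q • a - c₂ • ‖b‖ ^ q • b‖ ≤ δ * M ^ (q + 1) + K * (q + 1) * M ^ q * ‖a - b‖ := by
  have hsplit : c₁ • ‖a‖ ^ q • a - c₂ • ‖b‖ ^ q • b
      = (c₁ - c₂) • ‖a‖ ^ q • a + c₂ • (‖a‖ ^ q • a - ‖b‖ ^ q • b) := by
    rw [smul_sub, sub_smul]
    abel
  have hM : 0 ≤ M := (norm_nonneg a).trans ha
  calc ‖c₁ • ‖a‖ ^ q • a - c₂ • ‖b‖ ^ q • b‖
      ≤ |c₁ - c₂| * ‖‖a‖ ^ q • a‖ + c₂ * ‖‖a‖ ^ q • a - ‖b‖ ^ q • b‖ := by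
        rw [hsplit]
        refine (norm_add_le _ _).trans_eq ?_
        rw [norm_smul (c₁ - c₂), norm_smul_of_nonneg hc₂, Real.norm_eq_abs]
    _ ≤ δ * M ^ (q + 1) + K * ((q + 1) * M ^ q * ‖a - b‖) := by
        have hK : 0 ≤ K := hc₂.trans hc₂K
        gcongr
        · exact (abs_nonneg _).trans hc
        · exact norm_rpow_smul_le hq ha
        · exact norm_rpow_smul_sub_rpow_smul_le hq ha hb
    _ = δ * M ^ (q + 1) + K * (q + 1) * M ^ q * ‖a - b‖ := by ring

lemma norm_smul_rpow_smul_le (hq : 0 ≤ q) {c K : ℝ} (hc : 0 ≤ c) (hcK : c ≤ K) {a : E}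
    (ha : ‖a‖ ≤ M) : ‖c • ‖a‖ ^ q • a‖ ≤ K * M ^ (q + 1) := by
  rw [norm_smul_of_nonneg hc]
  exact mul_le_mul hcK (norm_rpow_smul_le hq ha) (norm_nonneg _) (hc.trans hcK)

end RpowSmul

lemma norm_integral_smul_sub_integral_smul_le {X E : Type*} [MeasurableSpace X] {μ : Measure X}
    [NormedAddCommGroup E] [NormedSpace ℝ E] {ρ : X → ℝ} {f g : X → E} {C : ℝ}
    (hρ0 : ∀ y, 0 ≤ ρ y) (hρ : Integrable ρ μ) (hf : Integrable (fun y ↦ ρ y • f y) μ)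
    (hg : Integrable (fun y ↦ ρ y • g y) μ) (hfg : ∀ y, ‖f y - g y‖ ≤ C) :
    ‖∫ y, ρ y • f y ∂μ - ∫ y, ρ y • g y ∂μ‖ ≤ C * ∫ y, ρ y ∂μ := by
  rw [← integral_sub hf hg, ← integral_const_mul]
  refine norm_integral_le_of_norm_le (hρ.const_mul C) (ae_of_all _ fun y ↦ ?_)
  rw [← smul_sub, norm_smul, Real.norm_of_nonneg (hρ0 y), mul_comm]
  exact mul_le_mul_of_nonneg_right (hfg y) (hρ0 y)

theorem alignment_force_lipschitz_general (d : ℕ)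
    (p V Lφ Lu K : ℝ) (hp : 2 ≤ p)
    (φ : EuclideanSpace ℝ (Fin d) → ℝ)
    (hφ0 : ∀ x, 0 ≤ φ x) (hφK : ∀ x, φ x ≤ K)
    (hφLip : ∀ x y, |φ x - φ y| ≤ Lφ * ‖x - y‖)
    (u : EuclideanSpace ℝ (Fin d) → EuclideanSpace ℝ (Fin d))
    (huLip : ∀ x y, ‖u x - u y‖ ≤ Lu * ‖x - y‖)
    (huV : ∀ x y, ‖u y - u x‖ ≤ V)
    (ρ : EuclideanSpace ℝ (Fin d) → ℝ)
    (hρ0 : ∀ y, 0 ≤ ρ y) (hρint : Integrable ρ) (hρ1 : (∫ y, ρ y) = 1)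
    (A : EuclideanSpace ℝ (Fin d) → EuclideanSpace ℝ (Fin d))
    (hA : ∀ x, A x = ∫ y, (φ (x - y) * ‖u y - u x‖ ^ (p - 2) * ρ y) • (u y - u x)) :
    ∀ x₁ x₂, ‖A x₁ - A x₂‖ ≤ (Lφ * V ^ (p - 1) + K * (p - 1) * V ^ (p - 2) * Lu) * ‖x₁ - x₂‖ := by
  have hq : 0 ≤ p - 2 := by linarith
  have hφ : Continuous φ := (LipschitzWith.of_dist_le' (K := Lφ) fun x y ↦ by
    simpa only [Real.dist_eq, dist_eq_norm, Real.norm_eq_abs] using hφLip x y).continuous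
  have hu : Continuous u := (LipschitzWith.of_dist_le' (K := Lu) fun x y ↦ by
    simpa only [dist_eq_norm] using huLip x y).continuous
  set F := fun x y ↦ φ (x - y) • ‖u y - u x‖ ^ (p - 2) • (u y - u x) with hF
  have hAF : ∀ x, A x = ∫ y, ρ y • F x y := fun x ↦ by
    simp only [hA, hF, smul_smul, mul_comm (ρ _), mul_assoc]
  have hint : ∀ x, Integrable (fun y ↦ ρ y • F x y) := fun x ↦
    hρint.smul_bdd (K * V ^ (p - 2 + 1)) (by fun_prop (disch := exact Or.inr hq))
      (ae_of_all _ fun y ↦ norm_smul_rpow_smul_le hq (hφ0 _) (hφK _) (huV x y))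
  have hK : 0 ≤ K := (hφ0 0).trans (hφK 0)
  have hV : 0 ≤ V := (norm_nonneg _).trans (huV 0 0)
  intro x₁ x₂
  rw [hAF, hAF, show p - 1 = p - 2 + 1 by ring]
  refine (norm_integral_smul_sub_integral_smul_le hρ0 hρint (hint x₁) (hint x₂) fun y ↦ ?_).trans_eq
    (by rw [hρ1, mul_one])
  calc ‖F x₁ y - F x₂ y‖
      ≤ Lφ * ‖x₁ - x₂‖ * V ^ (p - 2 + 1) + K * (p - 2 + 1) * V ^ (p - 2) * ‖u x₂ - u x₁‖ := by
        simpa only [sub_sub_sub_cancel_left] using norm_smul_rpow_smul_sub_le hq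
          (by simpa only [sub_sub_sub_cancel_right] using hφLip (x₁ - y) (x₂ - y))
          (hφ0 _) (hφK _) (huV x₁ y) (huV x₂ y)
    _ ≤ Lφ * ‖x₁ - x₂‖ * V ^ (p - 2 + 1) + K * (p - 2 + 1) * V ^ (p - 2) * (Lu * ‖x₁ - x₂‖) := by
        gcongr
        exact norm_sub_rev (u x₂) (u x₁) ▸ huLip x₁ x₂
    _ = _ := by ring

theorem alignment_force_lipschitz (d : ℕ) (hd : 1 ≤ d)
    (p V Lφ Lu K : ℝ) (hp : 2 ≤ p) (hV : 0 < V) (hLφ : 0 ≤ Lφ) (hLu : 0 ≤ Lu) (hK : 0 ≤ K)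
    (φ : EuclideanSpace ℝ (Fin d) → ℝ)
    (hφ0 : ∀ x, 0 ≤ φ x) (hφK : ∀ x, φ x ≤ K)
    (hφLip : ∀ x y, |φ x - φ y| ≤ Lφ * ‖x - y‖)
    (u : EuclideanSpace ℝ (Fin d) → EuclideanSpace ℝ (Fin d))
    (huLip : ∀ x y, ‖u x - u y‖ ≤ Lu * ‖x - y‖)
    (huV : ∀ x y, ‖u y - u x‖ ≤ V)
    (ρ : EuclideanSpace ℝ (Fin d) → ℝ)
    (hρ0 : ∀ y, 0 ≤ ρ y) (hρint : Integrable ρ) (hρ1 : (∫ y, ρ y) = 1)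
    (A : EuclideanSpace ℝ (Fin d) → EuclideanSpace ℝ (Fin d))
    (hA : ∀ x, A x = ∫ y, (φ (x - y) * ‖u y - u x‖ ^ (p - 2) * ρ y) • (u y - u x)) :
    ∀ x₁ x₂, ‖A x₁ - A x₂‖ ≤ (Lφ * V ^ (p - 1) + K * (p - 1) * V ^ (p - 2) * Lu) * ‖x₁ - x₂‖ :=
  alignment_force_lipschitz_general d p V Lφ Lu K hp φ hφ0 hφK hφLip u huLip huV ρ hρ0 hρint hρ1 A
    hA
end

section
/- Let d ≥ 1 and p ≥ 2. Let f : ℝ^d × ℝ^d → ℝ be nonnegative and measurable and φ : ℝ^d → ℝ nonnegative and measurable. For x ∈ ℝ^d set ρ(x) = ∫ f(x,v) dv and assume ρ(x) > 0 for all x; define u(x) = (1/ρ(x)) ∫ v f(x,v) dv ∈ ℝ^d. Assume the function (x,v,y,w) ↦ φ(x−y) ‖u(y) − u(x)‖^(p−2) ‖w − v‖² f(x,v) f(y,w) is integrable on ℝ^(4d) and that (x,y) ↦ φ(x−y) ρ(x) ρ(y) ‖u(y) − u(x)‖^p is integrable on ℝ^(2d). Then (1/2) ∫∫∫∫ φ(x−y)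 ‖u(y) − u(x)‖^(p−2) ‖w − v‖² f(x,v) f(y,w) dx dy dv dw ≥ (1/2) ∫∫ φ(x−y) ρ(x) ρ(y) ‖u(y) − u(x)‖^p dx dy. -/
/-!
For fixed `x, y` the velocity profiles `f (x, ·)` and `f (y, ·)` have masses `ρ x, ρ y` and
barycenters `u x, u y`, so `∫∫ f (x, v) f (y, w) (w - v) = ρ x ρ y (u y - u x)`. Cauchy–Schwarz
for the weight `f (x, v) f (y, w)` turns this into
`ρ x ρ y ‖u y - u x‖² ≤ ∫∫ ‖w - v‖² f (x, v) f (y, w)`. Multiplying by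
`φ (x - y) ‖u y - u x‖ ^ (p - 2) ≥ 0` and integrating over `(x, y)`, after regrouping the four
variables as `((x, y), (v, w))` for Fubini, gives the inequality.
-/

open MeasureTheory Function

section Fubini

variable {α β γ δ : Type*} [MeasurableSpace α] [MeasurableSpace β] [MeasurableSpace γ]
  [MeasurableSpace δ] {μ : Measure α} {ν : Measure β} {κ : Measure γ} {τ : Measure δ}
  [SFinite μ] [SFinite ν] [SFinite κ] [SFinite τ]

theorem measurePreserving_prodProdProdComm :
    MeasurePreserving (fun q : (α × β) × (γ × δ) => ((q.1.1, q.2.1), (q.1.2, q.2.2)))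
      ((μ.prod ν).prod (κ.prod τ)) ((μ.prod κ).prod (ν.prod τ)) := by
  have hswap : MeasurePreserving (Prod.map Prod.swap id : (β × γ) × δ → (γ × β) × δ)
      ((ν.prod κ).prod τ) ((κ.prod ν).prod τ) :=
    Measure.measurePreserving_swap.prod (.id τ)
  have hmid : MeasurePreserving (Prod.map id (MeasurableEquiv.prodAssoc ∘ Prod.map Prod.swap id ∘
      MeasurableEquiv.prodAssoc.symm) : α × β × γ × δ → α × γ × β × δ)
      (μ.prod (ν.prod (κ.prod τ))) (μ.prod (κ.prod (ν.prod τ))) :=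
    (MeasurePreserving.id μ).prod ((measurePreserving_prodAssoc κ ν τ).comp
      (hswap.comp (measurePreserving_prodAssoc ν κ τ).symm))
  exact ((measurePreserving_prodAssoc μ κ (ν.prod τ)).symm.comp
    (hmid.comp (measurePreserving_prodAssoc μ ν (κ.prod τ))))

theorem integral_integral_le_of_le_integral_prod {L : α → β → ℝ} {G : α → β → γ → δ → ℝ}
    (hL : Integrable (uncurry L) (μ.prod ν))
    (hG : Integrable (fun q : (α × γ) × (β × δ) => G q.1.1 q.2.1 q.1.2 q.2.2)
      ((μ.prod κ).prod (ν.prod τ)))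
    (hLG : ∀ x y, Integrable (fun q : γ × δ => G x y q.1 q.2) (κ.prod τ) →
      L x y ≤ ∫ q, G x y q.1 q.2 ∂(κ.prod τ)) :
    ∫ x, ∫ y, L x y ∂ν ∂μ ≤ ∫ x, ∫ y, ∫ v, ∫ w, G x y v w ∂τ ∂κ ∂ν ∂μ := by
  have hG' : Integrable (fun z : (α × β) × (γ × δ) => G z.1.1 z.1.2 z.2.1 z.2.2)
      ((μ.prod ν).prod (κ.prod τ)) :=
    measurePreserving_prodProdProdComm.integrable_comp_of_integrable hG
  have hslice := hG'.prod_right_ae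
  calc ∫ x, ∫ y, L x y ∂ν ∂μ = ∫ z, L z.1 z.2 ∂(μ.prod ν) := integral_integral hL
    _ ≤ ∫ z, ∫ q, G z.1 z.2 q.1 q.2 ∂(κ.prod τ) ∂(μ.prod ν) :=
      integral_mono_ae hL hG'.integral_prod_left (hslice.mono fun z hz => hLG _ _ hz)
    _ = ∫ x, ∫ y, ∫ q, G x y q.1 q.2 ∂(κ.prod τ) ∂ν ∂μ :=
      (integral_integral (f := fun x y => ∫ q, G x y q.1 q.2 ∂(κ.prod τ))
        hG'.integral_prod_left).symm
    _ = ∫ x, ∫ y, ∫ v, ∫ w, G x y v w ∂τ ∂κ ∂ν ∂μ := by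
      refine integral_congr_ae ?_
      filter_upwards [Measure.ae_ae_of_ae_prod hslice] with x hx
      refine integral_congr_ae ?_
      filter_upwards [hx] with y hy
      exact (integral_integral hy).symm

end Fubini

section CauchySchwarz

variable {α E : Type*} [MeasurableSpace α] {μ : Measure α}
  [NormedAddCommGroup E] [NormedSpace ℝ E]

theorem sq_integral_mul_le_integral_mul_integral_mul_sq {F g : α → ℝ} (hF0 : 0 ≤ F)
    (hF : Integrable F μ) (hFg : Integrable (fun a => F a * g a) μ)
    (hFg2 : Integrable (fun a => F a * g a ^ 2) μ) :
    (∫ a, F a * g a ∂μ) ^ 2 ≤ (∫ a, F a ∂μ) * ∫ a, F a * g a ^ 2 ∂μ := by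
  have hquad : ∀ t : ℝ, 0 ≤ (∫ a, F a ∂μ) * (t * t) + (-2 * ∫ a, F a * g a ∂μ) * t +
      ∫ a, F a * g a ^ 2 ∂μ := fun t => by
    have hexpand : (fun a => F a * (g a - t) ^ 2) =
        fun a => t * t * F a + -2 * t * (F a * g a) + F a * g a ^ 2 := by
      funext a; ring
    have hnonneg : 0 ≤ ∫ a, F a * (g a - t) ^ 2 ∂μ :=
      integral_nonneg fun a => mul_nonneg (hF0 a) (sq_nonneg _)
    rw [hexpand, integral_add (f := fun a => t * t * F a + -2 * t * (F a * g a))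
      ((hF.const_mul _).add (hFg.const_mul _)) hFg2,
      integral_add (hF.const_mul _) (hFg.const_mul _), integral_const_mul,
      integral_const_mul] at hnonneg
    linarith
  have := discrim_le_zero hquad
  rw [discrim] at this
  linarith

theorem mul_le_integral_const_mul {c A : ℝ} {g : α → ℝ} (hc : 0 ≤ c)
    (hcg : Integrable (fun a => c * g a) μ) (h : Integrable g μ → A ≤ ∫ a, g a ∂μ) :
    c * A ≤ ∫ a, c * g a ∂μ := by
  rw [integral_const_mul]
  rcases hc.eq_or_lt with rfl | hc
  · simp
  · exact mul_le_mul_of_nonneg_left (h ((integrable_const_mul_iff hc.ne'.isUnit g).1 hcg)) hc.le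

theorem integrable_smul_of_integrable_mul_norm_sq {F : α → ℝ} {z : α → E} (hF0 : 0 ≤ F)
    (hF : Integrable F μ) (hz : AEStronglyMeasurable z μ)
    (hFz : Integrable (fun a => F a * ‖z a‖ ^ 2) μ) : Integrable (fun a => F a • z a) μ := by
  refine (hF.add hFz).mono' (hF.aestronglyMeasurable.smul hz) (ae_of_all _ fun a => ?_)
  have hz1 : ‖z a‖ ≤ 1 + ‖z a‖ ^ 2 := by nlinarith [sq_nonneg (‖z a‖ - 1)]
  rw [norm_smul, Real.norm_of_nonneg (hF0 a)]
  simpa only [Pi.add_apply, mul_add, mul_one] using mul_le_mul_of_nonneg_left hz1 (hF0 a)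

theorem norm_integral_smul_sq_le {F : α → ℝ} {z : α → E} (hF0 : 0 ≤ F) (hF : Integrable F μ)
    (hz : AEStronglyMeasurable z μ) (hFz : Integrable (fun a => F a * ‖z a‖ ^ 2) μ) :
    ‖∫ a, F a • z a ∂μ‖ ^ 2 ≤ (∫ a, F a ∂μ) * ∫ a, F a * ‖z a‖ ^ 2 ∂μ := by
  have hnorm : ∀ a, ‖F a • z a‖ = F a * ‖z a‖ := fun a => by
    rw [norm_smul, Real.norm_of_nonneg (hF0 a)]
  have hFz1 : Integrable (fun a => F a * ‖z a‖) μ := by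
    simpa only [hnorm] using (integrable_smul_of_integrable_mul_norm_sq hF0 hF hz hFz).norm
  calc ‖∫ a, F a • z a ∂μ‖ ^ 2 ≤ (∫ a, F a * ‖z a‖ ∂μ) ^ 2 := by
        gcongr
        simpa only [hnorm] using norm_integral_le_integral_norm (fun a => F a • z a)
    _ ≤ (∫ a, F a ∂μ) * ∫ a, F a * ‖z a‖ ^ 2 ∂μ :=
      sq_integral_mul_le_integral_mul_integral_mul_sq hF0 hF hFz1 hFz

end CauchySchwarz

section PairMoment

variable {E : Type*} [NormedAddCommGroup E] [NormedSpace ℝ E] [MeasurableSpace E]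

noncomputable def barycenter (μ : Measure E) (g : E → ℝ) : E :=
  (∫ v, g v ∂μ)⁻¹ • ∫ v, g v • v ∂μ

variable {μ ν : Measure E} [SFinite μ] [SFinite ν]

theorem integral_prod_mul_smul_sub {g₁ g₂ : E → ℝ}
    (hg₁ : Integrable g₁ μ) (hg₂ : Integrable g₂ ν)
    (hm₁ : Integrable (fun v => g₁ v • v) μ) (hm₂ : Integrable (fun w => g₂ w • w) ν) :
    ∫ q, (g₁ q.1 * g₂ q.2) • (q.2 - q.1) ∂(μ.prod ν) =
      (∫ v, g₁ v ∂μ) • (∫ w, g₂ w • w ∂ν) - (∫ w, g₂ w ∂ν) • ∫ v, g₁ v • v ∂μ := by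
  have hsplit : ∀ q : E × E, (g₁ q.1 * g₂ q.2) • (q.2 - q.1) =
      g₁ q.1 • (g₂ q.2 • q.2) - g₂ q.2 • (g₁ q.1 • q.1) := fun q => by
    rw [smul_sub, mul_smul, mul_comm, mul_smul]
  have hswap : ∫ q, g₂ q.2 • (g₁ q.1 • q.1) ∂(μ.prod ν) =
      (∫ w, g₂ w ∂ν) • ∫ v, g₁ v • v ∂μ := by
    rw [← integral_prod_swap]
    exact integral_prod_smul g₂ (fun v => g₁ v • v)
  simp_rw [hsplit]
  rw [integral_sub (g := fun q : E × E => g₂ q.2 • (g₁ q.1 • q.1)) (hg₁.smul_prod hm₂)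
    (hg₂.smul_prod hm₁).swap, integral_prod_smul g₁ (fun w => g₂ w • w), hswap]

variable [BorelSpace E] [SecondCountableTopology E]

theorem integrable_smul_id_of_integrable_prod_mul_norm_sub_sq
    {g₁ g₂ : E → ℝ} (hg₁0 : 0 ≤ g₁) (hg₁ : Integrable g₁ μ) (hg₂ : ∫ w, g₂ w ∂ν ≠ 0)
    (h : Integrable (fun q : E × E => g₁ q.1 * g₂ q.2 * ‖q.2 - q.1‖ ^ 2) (μ.prod ν)) :
    Integrable (fun v => g₁ v • v) μ := by
  -- Any `w` with `g₂ w ≠ 0` and an integrable slice bounds the second moment of `g₁` about `w`.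
  obtain ⟨w, hw, hslice⟩ :=
    ((frequently_ae_ne_zero_of_integral_ne_zero hg₂).and_eventually h.prod_left_ae).exists
  have hmoment : Integrable (fun v => g₁ v * ‖v - w‖ ^ 2) μ := by
    refine (hslice.mul_const (g₂ w)⁻¹).congr (ae_of_all _ fun v => ?_)
    simp only [norm_sub_rev w v]
    field_simp
  have hshift := integrable_smul_of_integrable_mul_norm_sq (z := fun v => v - w) hg₁0 hg₁
    (continuous_id.sub continuous_const).aestronglyMeasurable hmoment
  refine (hshift.add (hg₁.smul_const w)).congr (ae_of_all _ fun v => ?_)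
  simp only [Pi.add_apply, smul_sub, sub_add_cancel]

theorem mul_mul_norm_barycenter_sub_sq_le_integral_prod {g₁ g₂ : E → ℝ}
    (hg₁0 : 0 ≤ g₁) (hg₂0 : 0 ≤ g₂) (hg₁ : 0 < ∫ v, g₁ v ∂μ) (hg₂ : 0 < ∫ w, g₂ w ∂ν)
    (h : Integrable (fun q : E × E => g₁ q.1 * g₂ q.2 * ‖q.2 - q.1‖ ^ 2) (μ.prod ν)) :
    (∫ v, g₁ v ∂μ) * (∫ w, g₂ w ∂ν) * ‖barycenter ν g₂ - barycenter μ g₁‖ ^ 2 ≤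
      ∫ q, g₁ q.1 * g₂ q.2 * ‖q.2 - q.1‖ ^ 2 ∂(μ.prod ν) := by
  set r₁ := ∫ v, g₁ v ∂μ
  set r₂ := ∫ w, g₂ w ∂ν
  have hi₁ : Integrable g₁ μ := .of_integral_ne_zero hg₁.ne'
  have hi₂ : Integrable g₂ ν := .of_integral_ne_zero hg₂.ne'
  have h' : Integrable (fun q : E × E => g₂ q.1 * g₁ q.2 * ‖q.2 - q.1‖ ^ 2) (ν.prod μ) :=
    h.swap.congr (ae_of_all _ fun q => by
      simp only [comp_apply, Prod.fst_swap, Prod.snd_swap, norm_sub_rev q.1]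
      ring)
  have hm₁ := integrable_smul_id_of_integrable_prod_mul_norm_sub_sq hg₁0 hi₁ hg₂.ne' h
  have hm₂ := integrable_smul_id_of_integrable_prod_mul_norm_sub_sq hg₂0 hi₂ hg₁.ne' h'
  have hmass : ∫ q, g₁ q.1 * g₂ q.2 ∂(μ.prod ν) = r₁ * r₂ := integral_prod_mul g₁ g₂
  have hbary : ∫ q, (g₁ q.1 * g₂ q.2) • (q.2 - q.1) ∂(μ.prod ν) =
      (r₁ * r₂) • (barycenter ν g₂ - barycenter μ g₁) := by
    rw [integral_prod_mul_smul_sub hi₁ hi₂ hm₁ hm₂, barycenter, barycenter, smul_sub, smul_smul,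
      smul_smul, mul_assoc, mul_inv_cancel₀ hg₂.ne', mul_one, mul_right_comm,
      mul_inv_cancel₀ hg₁.ne', one_mul]
  have hCS := norm_integral_smul_sq_le (z := fun q : E × E => q.2 - q.1)
    (fun q => mul_nonneg (hg₁0 q.1) (hg₂0 q.2)) (hi₁.mul_prod hi₂)
    (continuous_snd.sub continuous_fst).aestronglyMeasurable h
  rw [hbary, hmass, norm_smul, Real.norm_of_nonneg (mul_pos hg₁ hg₂).le] at hCS
  refine le_of_mul_le_mul_left ?_ (mul_pos hg₁ hg₂)
  linarith

end PairMoment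

theorem macroscopic_enstrophy_le_general (d : ℕ) (p : ℝ) (hp : 2 ≤ p)
    (f : EuclideanSpace ℝ (Fin d) × EuclideanSpace ℝ (Fin d) → ℝ)
    (hf0 : ∀ q, 0 ≤ f q)
    (φ : EuclideanSpace ℝ (Fin d) → ℝ) (hφ0 : ∀ x, 0 ≤ φ x)
    (ρ : EuclideanSpace ℝ (Fin d) → ℝ) (hρ : ∀ x, ρ x = ∫ v, f (x, v))
    (hρ0 : ∀ x, 0 < ρ x)
    (u : EuclideanSpace ℝ (Fin d) → EuclideanSpace ℝ (Fin d))
    (hu : ∀ x, u x = (ρ x)⁻¹ • ∫ v, f (x, v) • v)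
    (hint1 : Integrable (fun q : (EuclideanSpace ℝ (Fin d) × EuclideanSpace ℝ (Fin d)) ×
        (EuclideanSpace ℝ (Fin d) × EuclideanSpace ℝ (Fin d)) =>
      φ (q.1.1 - q.2.1) * ‖u q.2.1 - u q.1.1‖ ^ (p - 2) * ‖q.2.2 - q.1.2‖ ^ 2 *
        f q.1 * f q.2))
    (hint2 : Integrable (fun xy : EuclideanSpace ℝ (Fin d) × EuclideanSpace ℝ (Fin d) =>
      φ (xy.1 - xy.2) * ρ xy.1 * ρ xy.2 * ‖u xy.2 - u xy.1‖ ^ p)) :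
    (1 / 2) * ∫ x, ∫ y, φ (x - y) * ρ x * ρ y * ‖u y - u x‖ ^ p ≤
      (1 / 2) * ∫ x, ∫ y, ∫ v, ∫ w,
        φ (x - y) * ‖u y - u x‖ ^ (p - 2) * ‖w - v‖ ^ 2 * f (x, v) * f (y, w) := by
  refine mul_le_mul_of_nonneg_left ?_ (by norm_num)
  refine integral_integral_le_of_le_integral_prod hint2 hint1 fun x y hxy => ?_
  have hu_bary : ∀ x, u x = barycenter volume (fun v => f (x, v)) := fun x => by
    rw [hu, hρ, barycenter]
  have hpow : ‖u y - u x‖ ^ p = ‖u y - u x‖ ^ (p - 2) * ‖u y - u x‖ ^ 2 := by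
    rw [← Real.rpow_natCast, ← Real.rpow_add' (norm_nonneg _) (by push_cast; linarith)]
    norm_num
  calc φ (x - y) * ρ x * ρ y * ‖u y - u x‖ ^ p
      = (φ (x - y) * ‖u y - u x‖ ^ (p - 2)) * (ρ x * ρ y * ‖u y - u x‖ ^ 2) := by
        rw [hpow]; ring
    _ ≤ ∫ q : EuclideanSpace ℝ (Fin d) × EuclideanSpace ℝ (Fin d),
          (φ (x - y) * ‖u y - u x‖ ^ (p - 2)) * (f (x, q.1) * f (y, q.2) * ‖q.2 - q.1‖ ^ 2)
          ∂(volume.prod volume) := by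
        refine mul_le_integral_const_mul (mul_nonneg (hφ0 _) (by positivity))
          (hxy.congr (ae_of_all _ fun q => by ring)) fun h => ?_
        rw [hρ, hρ, hu_bary, hu_bary]
        exact mul_mul_norm_barycenter_sub_sq_le_integral_prod (fun _ => hf0 _) (fun _ => hf0 _)
          (hρ x ▸ hρ0 x) (hρ y ▸ hρ0 y) h
    _ = _ := integral_congr_ae (ae_of_all _ fun q => by ring)

theorem macroscopic_enstrophy_le (d : ℕ) (hd : 1 ≤ d) (p : ℝ) (hp : 2 ≤ p)
    (f : EuclideanSpace ℝ (Fin d) × EuclideanSpace ℝ (Fin d) → ℝ)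
    (hfm : Measurable f) (hf0 : ∀ q, 0 ≤ f q)
    (φ : EuclideanSpace ℝ (Fin d) → ℝ) (hφm : Measurable φ) (hφ0 : ∀ x, 0 ≤ φ x)
    (ρ : EuclideanSpace ℝ (Fin d) → ℝ) (hρ : ∀ x, ρ x = ∫ v, f (x, v))
    (hρ0 : ∀ x, 0 < ρ x)
    (u : EuclideanSpace ℝ (Fin d) → EuclideanSpace ℝ (Fin d))
    (hu : ∀ x, u x = (ρ x)⁻¹ • ∫ v, f (x, v) • v)
    (hint1 : Integrable (fun q : (EuclideanSpace ℝ (Fin d) × EuclideanSpace ℝ (Fin d)) ×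
        (EuclideanSpace ℝ (Fin d) × EuclideanSpace ℝ (Fin d)) =>
      φ (q.1.1 - q.2.1) * ‖u q.2.1 - u q.1.1‖ ^ (p - 2) * ‖q.2.2 - q.1.2‖ ^ 2 *
        f q.1 * f q.2))
    (hint2 : Integrable (fun xy : EuclideanSpace ℝ (Fin d) × EuclideanSpace ℝ (Fin d) =>
      φ (xy.1 - xy.2) * ρ xy.1 * ρ xy.2 * ‖u xy.2 - u xy.1‖ ^ p)) :
    (1 / 2) * ∫ x, ∫ y, φ (x - y) * ρ x * ρ y * ‖u y - u x‖ ^ p ≤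
      (1 / 2) * ∫ x, ∫ y, ∫ v, ∫ w,
        φ (x - y) * ‖u y - u x‖ ^ (p - 2) * ‖w - v‖ ^ 2 * f (x, v) * f (y, w) :=
  macroscopic_enstrophy_le_general d p hp f hf0 φ hφ0 ρ hρ hρ0 u hu hint1 hint2
end
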